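/- arXiv:1905.04575 — 3 statements merged into one kernel-verified Lean document; each statement's English description precedes it below -/
import Mathlib

section
/- Let X be a metrizable topological vector space over ℝ and F a closed ℓ-miserable set in X. Then there exists a lower semicontinuous linearly continuous function f : X → [0, 1] such that the set D(f) of discontinuity points of f equals F and F ⊆ f⁻¹(0). -/
/-!
Fix a compatible metric and a closed ℓ-neighborhood `L` of `F` with `F ⊆ closure Lᶜ`. The union
`S` of maximal `1/(n+1)`-separated subsets of `Lᶜ ∩ thickening (1/(n+1)) F` lies in `Lᶜ`, and
its closure is `S ∪ F`: each piece is closed and the pieces converge to `F`. The function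
`d(·, L) / (d(·, L) + d(·, closure S))` vanishes on `L`, equals `1` on `S` and is continuous off
`L ∩ closure S = F`; it is therefore discontinuous exactly on `F ⊆ closure S`, lower
semicontinuous because it attains its minimum `0` on `F`, and linearly continuous because a
line through a point of `F` stays in `L`, where the function vanishes, near that point.
-/

open Topology Filter Set TopologicalSpace

section Definitions

variable {X Y : Type*}

/-- A set `U` is functionally open if it is the preimage of an open set of `ℝ`
under a continuous real-valued function. -/
def FunctionallyOpen [TopologicalSpace Y] (U : Set Y) : Prop :=
  ∃ g : Y → ℝ, Continuous g ∧ ∃ V : Set ℝ, IsOpen V ∧ U = g ⁻¹' V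

/-- A set is `Fσ` if it is a countable union of closed sets. -/
def IsFSigma [TopologicalSpace X] (s : Set X) : Prop :=
  ∃ F : ℕ → Set X, (∀ n, IsClosed (F n)) ∧ s = ⋃ n, F n

/-- A function is `Fσ`-measurable if preimages of functionally open sets are `Fσ`. -/
def FSigmaMeasurable [TopologicalSpace X] [TopologicalSpace Y] (f : X → Y) : Prop :=
  ∀ U : Set Y, FunctionallyOpen U → IsFSigma (f ⁻¹' U)

/-- A set has the Baire property if its symmetric difference with some open set is meager. -/
def HasBaireProperty [TopologicalSpace X] (A : Set X) : Prop :=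
  ∃ O : Set X, IsOpen O ∧ IsMeagre (symmDiff O A)

/-- A function is BP-measurable if preimages of functionally open sets have the Baire
property. -/
def BPMeasurable [TopologicalSpace X] [TopologicalSpace Y] (f : X → Y) : Prop :=
  ∀ U : Set Y, FunctionallyOpen U → HasBaireProperty (f ⁻¹' U)

/-- A function on a topological vector space is linearly continuous if its restriction to
every affine line is continuous. -/
def LinearlyContinuous [AddCommGroup X] [Module ℝ X] [TopologicalSpace X] [TopologicalSpace Y]
    (f : X → Y) : Prop :=
  ∀ x v : X, Continuous fun t : ℝ => f (x + t • v)

/-- A function is quasi-continuous if for every point `x`, every neighborhood `V` of `x`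
and every neighborhood `W` of `f x` there is a nonempty open `U ⊆ V` with `f '' U ⊆ W`. -/
def QuasiContinuous [TopologicalSpace X] [TopologicalSpace Y] (f : X → Y) : Prop :=
  ∀ x : X, ∀ V ∈ 𝓝 x, ∀ W ∈ 𝓝 (f x),
    ∃ U : Set X, IsOpen U ∧ U.Nonempty ∧ U ⊆ V ∧ f '' U ⊆ W

/-- A set `U` is conical at `x` if it is nonempty and contains the open segment from `x`
to each of its points. -/
def ConicalAt [AddCommGroup X] [Module ℝ X] (x : X) (U : Set X) : Prop :=
  U.Nonempty ∧ ∀ u ∈ U, ∀ t : ℝ, 0 < t → t < 1 → (1 - t) • x + t • u ∈ U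

/-- Conical quasi-continuity. -/
def ConicallyQuasiContinuous [AddCommGroup X] [Module ℝ X] [TopologicalSpace X]
    [TopologicalSpace Y] (f : X → Y) : Prop :=
  ∀ x : X, ∀ V : Set X, IsOpen V → ConicalAt x V → ∀ W : Set Y, IsOpen W → f x ∈ W →
    ∃ U : Set X, IsOpen U ∧ ConicalAt x U ∧ U ⊆ V ∧ f '' U ⊆ W

/-- `L` is an ℓ-neighborhood of `A`. -/
def IsLNbhd [AddCommGroup X] [Module ℝ X] (L A : Set X) : Prop :=
  ∀ a ∈ A, ∀ v : X, ∃ ε > (0 : ℝ), ∀ t : ℝ, 0 ≤ t → t < ε → a + t • v ∈ L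

/-- A set `A` is ℓ-miserable if `A ⊆ closure (X \ L)` for some closed ℓ-neighborhood `L`
of `A`. -/
def LMiserable [AddCommGroup X] [Module ℝ X] [TopologicalSpace X] (A : Set X) : Prop :=
  ∃ L : Set X, IsClosed L ∧ IsLNbhd L A ∧ A ⊆ closure Lᶜ

/-- A set is σ̄-ℓ-miserable if it is a countable union of closed ℓ-miserable sets. -/
def SigmaLMiserable [AddCommGroup X] [Module ℝ X] [TopologicalSpace X] (A : Set X) : Prop :=
  ∃ F : ℕ → Set X, (∀ n, IsClosed (F n) ∧ LMiserable (F n)) ∧ A = ⋃ n, F n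

/-- A function is of the first Baire class if it is a pointwise limit of a sequence of
continuous functions. -/
def BaireClassOne [TopologicalSpace X] [TopologicalSpace Y] (f : X → Y) : Prop :=
  ∃ g : ℕ → X → Y, (∀ n, Continuous (g n)) ∧
    ∀ x, Tendsto (fun n => g n x) atTop (𝓝 (f x))

/-- A topological space is cosmic if it is a continuous image of a separable metrizable
space. -/
def CosmicSpace (X : Type*) [TopologicalSpace X] : Prop :=
  ∃ (M : Type) (_ : TopologicalSpace M), MetrizableSpace M ∧ SeparableSpace M ∧
    ∃ g : M → X, Continuous g ∧ Function.Surjective g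

/-- A set `C` is strictly convex if for any distinct points of its closure the open segment
between them lies in `C`. -/
def StrictlyConvexSet [AddCommGroup X] [Module ℝ X] [TopologicalSpace X] (C : Set X) : Prop :=
  ∀ x ∈ closure C, ∀ y ∈ closure C, x ≠ y →
    ∀ t : ℝ, 0 < t → t < 1 → (1 - t) • x + t • y ∈ C

/-- A function is σ̄-continuous if the space is a countable union of closed sets on each of
which the function is continuous. -/
def SigmaContinuous [TopologicalSpace X] [TopologicalSpace Y] (f : X → Y) : Prop :=
  ∃ F : ℕ → Set X, (∀ n, IsClosed (F n)) ∧ (⋃ n, F n) = Set.univ ∧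
    ∀ n, ContinuousOn f (F n)

end Definitions

namespace Metric

variable {X : Type*}

lemma exists_separated_subset_forall_exists_dist_lt [PseudoMetricSpace X] (s : Set X) {ε : ℝ}
    (hε : 0 < ε) :
    ∃ N ⊆ s, N.Pairwise (fun x y => ε ≤ dist x y) ∧ ∀ x ∈ s, ∃ y ∈ N, dist x y < ε := by
  obtain ⟨N, ⟨hNs, hN⟩, hmax⟩ :=
    zorn_subset {N | N ⊆ s ∧ N.Pairwise fun x y => ε ≤ dist x y} fun c hc hchain =>
      ⟨⋃₀ c, ⟨sUnion_subset fun t ht => (hc ht).1, hchain.pairwise_sUnion.2 fun t ht => (hc ht).2⟩,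
        fun _ => subset_sUnion_of_mem⟩
  refine ⟨N, hNs, hN, fun x hx => ?_⟩
  by_contra! hfar
  have hxN : x ∈ N := hmax ⟨insert_subset hx hNs,
    pairwise_insert.2 ⟨hN, fun y hy _ => ⟨hfar y hy, dist_comm x y ▸ hfar y hy⟩⟩⟩
    (subset_insert x N) (mem_insert x N)
  simpa [hε.not_ge] using hfar x hxN

lemma closure_iUnion_subset_union_of_subset_thickening [PseudoMetricSpace X] {A : Set X}
    (hA : IsClosed A) {S : ℕ → Set X} (hS : ∀ n, IsClosed (S n)) {ε : ℕ → ℝ}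
    (hε : Tendsto ε atTop (𝓝 0)) (hSA : ∀ n, S n ⊆ thickening (ε n) A) :
    closure (⋃ n, S n) ⊆ (⋃ n, S n) ∪ A := by
  intro p hp
  refine or_iff_not_imp_right.2 fun hpA => ?_
  rw [← hA.closure_eq, closure_eq_iInter_cthickening] at hpA
  simp only [mem_iInter, not_forall] at hpA
  obtain ⟨δ, hδ, hpδ⟩ := hpA
  obtain ⟨N, hN⟩ := eventually_atTop.1 (hε.eventually (gt_mem_nhds hδ))
  have hsplit : (⋃ n, S n) ⊆ (⋃ n ∈ Finset.range N, S n) ∪ thickening δ A := by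
    refine iUnion_subset fun n => ?_
    rcases lt_or_ge n N with hn | hn
    · exact (subset_biUnion_of_mem (Finset.mem_range.2 hn)).trans subset_union_left
    · exact (hSA n).trans ((thickening_mono (hN n hn).le A).trans subset_union_right)
  have hp' := closure_mono hsplit hp
  rw [closure_union, (isClosed_biUnion_finset fun n _ => hS n).closure_eq] at hp'
  rcases hp' with hp' | hp'
  · obtain ⟨n, -, hpn⟩ := mem_iUnion₂.1 hp'
    exact mem_iUnion.2 ⟨n, hpn⟩
  · exact absurd (closure_thickening_subset_cthickening δ A hp') hpδ

lemma exists_subset_closure_eq_union [MetricSpace X] {A B : Set X} (hA : IsClosed A)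
    (hAB : A ⊆ closure B) : ∃ S ⊆ B, closure S = S ∪ A := by
  have hε : ∀ n : ℕ, (0 : ℝ) < 1 / (n + 1) := fun n => by positivity
  choose N hNB hNsep hNcov using fun n : ℕ =>
    exists_separated_subset_forall_exists_dist_lt (B ∩ thickening (1 / (n + 1)) A) (hε n)
  have hclosed : ∀ n, IsClosed (N n) := fun n => isClosed_of_pairwise_le_dist (hε n) (hNsep n)
  refine ⟨⋃ n, N n, iUnion_subset fun n => (hNB n).trans inter_subset_left,
    (closure_iUnion_subset_union_of_subset_thickening hA hclosed
      tendsto_one_div_add_atTop_nhds_zero_nat fun n => (hNB n).trans inter_subset_right).antisymm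
      (union_subset subset_closure ?_)⟩
  intro a ha
  refine Metric.mem_closure_iff.2 fun r hr => ?_
  obtain ⟨n, hn⟩ := exists_nat_one_div_lt (half_pos hr)
  obtain ⟨b, hbB, hab⟩ := Metric.mem_closure_iff.1 (hAB ha) _ (hε n)
  have hb : b ∈ B ∩ thickening (1 / (n + 1)) A :=
    ⟨hbB, mem_thickening_iff.2 ⟨a, ha, by rwa [dist_comm]⟩⟩
  obtain ⟨y, hyN, hby⟩ := hNcov n b hb
  exact ⟨y, mem_iUnion.2 ⟨n, hyN⟩, by linarith [dist_triangle a b y]⟩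

section infDistRatio

variable [PseudoMetricSpace X] {L T S : Set X} {x : X}

noncomputable def infDistRatio (L T : Set X) (x : X) : ℝ :=
  infDist x L / (infDist x L + infDist x T)

lemma infDistRatio_mem_Icc (L T : Set X) (x : X) : infDistRatio L T x ∈ Icc 0 1 :=
  ⟨div_nonneg infDist_nonneg (add_nonneg infDist_nonneg infDist_nonneg),
    div_le_one_of_le₀ (le_add_of_nonneg_right infDist_nonneg)
      (add_nonneg infDist_nonneg infDist_nonneg)⟩

lemma infDistRatio_of_mem (hx : x ∈ L) : infDistRatio L T x = 0 := by
  rw [infDistRatio, infDist_zero_of_mem hx, zero_div]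

lemma infDistRatio_of_mem_of_notMem (hL : IsClosed L) (hL' : L.Nonempty) (hxT : x ∈ T)
    (hxL : x ∉ L) : infDistRatio L T x = 1 := by
  rw [infDistRatio, infDist_zero_of_mem hxT, add_zero,
    div_self ((hL.notMem_iff_infDist_pos hL').1 hxL).ne']

lemma continuousAt_infDistRatio (hL : IsClosed L) (hL' : L.Nonempty) (hT : IsClosed T)
    (hT' : T.Nonempty) (hx : x ∉ L ∩ T) : ContinuousAt (infDistRatio L T) x := by
  refine (continuous_infDist_pt L).continuousAt.div
    ((continuous_infDist_pt L).add (continuous_infDist_pt T)).continuousAt fun h0 => hx ?_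
  have hxL : infDist x L = 0 := le_antisymm (by linarith [infDist_nonneg (x := x) (s := T)])
    infDist_nonneg
  have hxT : infDist x T = 0 := by linarith
  exact ⟨(hL.mem_iff_infDist_zero hL').2 hxL, (hT.mem_iff_infDist_zero hT').2 hxT⟩

lemma lowerSemicontinuous_infDistRatio (hL : IsClosed L) (hL' : L.Nonempty) (hT : IsClosed T)
    (hT' : T.Nonempty) : LowerSemicontinuous (infDistRatio L T) := by
  intro x
  by_cases hxL : x ∈ L
  · intro y hy
    rw [infDistRatio_of_mem hxL] at hy
    exact Eventually.of_forall fun z => hy.trans_le (infDistRatio_mem_Icc L T z).1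
  · exact (continuousAt_infDistRatio hL hL' hT hT' fun h => hxL h.1).lowerSemicontinuousAt

lemma setOf_not_continuousAt_infDistRatio_closure (hL : IsClosed L) (hL' : L.Nonempty)
    (hS : S.Nonempty) (hSL : Disjoint S L) :
    {x | ¬ContinuousAt (infDistRatio L (closure S)) x} = L ∩ closure S := by
  refine Subset.antisymm (fun x hx => not_not.1 fun h => hx
    (continuousAt_infDistRatio hL hL' isClosed_closure hS.closure h)) ?_
  rintro x ⟨hxL, hxS⟩ hcont
  have hone : infDistRatio L (closure S) '' S ⊆ {1} := by
    rintro _ ⟨y, hy, rfl⟩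
    exact infDistRatio_of_mem_of_notMem hL hL' (subset_closure hy) (hSL.notMem_of_mem_left hy)
  have h := closure_mono hone (hcont.continuousWithinAt.mem_closure_image hxS)
  rw [closure_singleton, mem_singleton_iff, infDistRatio_of_mem hxL] at h
  exact zero_ne_one h

end infDistRatio

end Metric

section LNbhd

variable {X : Type*} [AddCommGroup X] [Module ℝ X] {L A : Set X}

lemma IsLNbhd.subset (hL : IsLNbhd L A) : A ⊆ L := fun a ha => by
  obtain ⟨ε, hε, h⟩ := hL a ha 0
  simpa using h 0 le_rfl hε

lemma IsLNbhd.eventually_mem (hL : IsLNbhd L A) {a : X} (ha : a ∈ A) (v : X) :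
    ∀ᶠ t in 𝓝 (0 : ℝ), a + t • v ∈ L := by
  obtain ⟨ε₁, hε₁, h₁⟩ := hL a ha v
  obtain ⟨ε₂, hε₂, h₂⟩ := hL a ha (-v)
  filter_upwards [Ioo_mem_nhds (neg_lt_zero.2 hε₂) hε₁] with t ht
  rcases le_or_gt 0 t with h | h
  · exact h₁ t h ht.2
  · simpa using h₂ (-t) (by linarith) (by linarith [ht.1])

lemma linearlyContinuous_of_eqOn_const_of_continuousAt [TopologicalSpace X] [ContinuousAdd X]
    [ContinuousSMul ℝ X] {Y : Type*} [TopologicalSpace Y] {f : X → Y} {c : Y}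
    (hL : IsLNbhd L A) (hfL : EqOn f (fun _ => c) L) (hf : ∀ x ∉ A, ContinuousAt f x) :
    LinearlyContinuous f := by
  intro x v
  refine continuous_iff_continuousAt.2 fun t₀ => ?_
  by_cases hA : x + t₀ • v ∈ A
  · have hshift : Tendsto (fun t : ℝ => t - t₀) (𝓝 t₀) (𝓝 0) := by
      simpa using (continuous_sub_right t₀).tendsto t₀
    have hconst : ∀ᶠ t in 𝓝 t₀, f (x + t • v) = c := by
      filter_upwards [hshift.eventually (hL.eventually_mem hA v)] with t ht
      exact hfL (by rwa [add_assoc, ← add_smul, add_sub_cancel] at ht)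
    exact continuousAt_const.congr (hconst.mono fun _ h => h.symm)
  · exact (hf _ hA).comp (f := fun t : ℝ => x + t • v) (by fun_prop)

end LNbhd

open Metric in
theorem stmt16_general {X : Type*} [AddCommGroup X] [Module ℝ X] [TopologicalSpace X]
    [IsTopologicalAddGroup X] [ContinuousSMul ℝ X] [MetrizableSpace X]
    (F : Set X) (hFc : IsClosed F) (hFm : LMiserable F) :
    ∃ f : X → ℝ, (∀ x, f x ∈ Set.Icc (0 : ℝ) 1) ∧ LowerSemicontinuous f ∧
      LinearlyContinuous f ∧ {x : X | ¬ ContinuousAt f x} = F ∧ F ⊆ f ⁻¹' {0} := by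
  let := metrizableSpaceMetric X
  obtain ⟨L, hLc, hLF, hFL⟩ := hFm
  rcases F.eq_empty_or_nonempty with rfl | hFne
  · exact ⟨0, fun _ => ⟨le_rfl, zero_le_one⟩, lowerSemicontinuous_const,
      fun _ _ => continuous_const,
      eq_empty_iff_forall_notMem.2 fun _ h => h continuousAt_const, empty_subset _⟩
  obtain ⟨S, hSL, hS⟩ := exists_subset_closure_eq_union hFc hFL
  have hSne : S.Nonempty :=
    closure_nonempty_iff.1 (hS ▸ hFne.mono subset_union_right)
  have hSdisj : Disjoint S L := subset_compl_iff_disjoint_right.1 hSL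
  have hLne : L.Nonempty := hFne.mono hLF.subset
  have hD : L ∩ closure S = F := by
    rw [hS, inter_union_distrib_left, hSdisj.symm.inter_eq, empty_union,
      inter_eq_right.2 hLF.subset]
  refine ⟨infDistRatio L (closure S), infDistRatio_mem_Icc L _,
    lowerSemicontinuous_infDistRatio hLc hLne isClosed_closure hSne.closure,
    linearlyContinuous_of_eqOn_const_of_continuousAt hLF (fun _ => infDistRatio_of_mem)
      fun x hx => continuousAt_infDistRatio hLc hLne isClosed_closure hSne.closure (hD ▸ hx),
    hD ▸ setOf_not_continuousAt_infDistRatio_closure hLc hLne hSne hSdisj,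
    fun x hx => infDistRatio_of_mem (hLF.subset hx)⟩

/-- For a closed ℓ-miserable set `F` in a metrizable topological vector space there is a
lower semicontinuous linearly continuous function `f : X → [0,1]` with `D(f) = F` and
`F ⊆ f⁻¹(0)`. -/
theorem stmt16 {X : Type*} [AddCommGroup X] [Module ℝ X] [TopologicalSpace X]
    [IsTopologicalAddGroup X] [ContinuousSMul ℝ X] [T2Space X] [MetrizableSpace X]
    (F : Set X) (hFc : IsClosed F) (hFm : LMiserable F) :
    ∃ f : X → ℝ, (∀ x, f x ∈ Set.Icc (0 : ℝ) 1) ∧ LowerSemicontinuous f ∧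
      LinearlyContinuous f ∧ {x : X | ¬ ContinuousAt f x} = F ∧ F ⊆ f ⁻¹' {0} :=
  stmt16_general F hFc hFm
end

section
/- Let U be a strictly convex open set in a Hausdorff topological vector space X over ℝ with nonempty boundary ∂U. Then X admits a continuous norm ‖·‖ such that U remains open and strictly convex in the normed space (X, ‖·‖), i.e., U is open with respect to the norm topology, and the closure of U with respect to the norm topology equals its closure in X, so that for any distinct points x, y of the norm-closure of U the open segment {(1−t)x + t y : 0 < t < 1} is contained in U. -/
open Topology Filter Set TopologicalSpace

/-!
Fix `x₀ ∈ U` and let `W = (U - x₀) ∩ (x₀ - U)`, a convex, balanced, open neighbourhood of `0`.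
Its gauge is a continuous seminorm, and convex combinations with `x₀` show that `U` is open and has
the same closure for this seminorm as in `X`. The seminorm is a norm: if the gauge of `v` vanishes,
then `U` contains the whole line `x₀ + ℝ v`, so `closure U` contains the line `b + ℝ v` through a
boundary point `b`; strict convexity would then put `b`, the midpoint of `b ± v`, in `U` unless
`v = 0`.
-/

section StrictlyConvex

variable {E : Type*} [AddCommGroup E] [Module ℝ E] [TopologicalSpace E] {U : Set E}

theorem StrictlyConvexSet.convex (hU : StrictlyConvexSet U) : Convex ℝ U := by
  refine convex_iff_openSegment_subset.2 fun x hx y hy => ?_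
  rcases eq_or_ne x y with rfl | hxy
  · simpa [openSegment_same] using hx
  rw [openSegment_eq_image]
  rintro _ ⟨t, ⟨ht₀, ht₁⟩, rfl⟩
  exact hU x (subset_closure hx) y (subset_closure hy) hxy t ht₀ ht₁

theorem StrictlyConvexSet.eq_zero_of_forall_add_smul_mem_closure (hU : StrictlyConvexSet U)
    {b v : E} (hb : b ∉ U) (hline : ∀ t : ℝ, b + t • v ∈ closure U) : v = 0 := by
  by_contra hv
  have hne : b + (1 : ℝ) • v ≠ b + (-1 : ℝ) • v := by
    simpa [eq_neg_iff_add_eq_zero, ← two_smul ℝ v] using hv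
  have hmid := hU _ (hline 1) _ (hline (-1)) hne (1 / 2) (by norm_num) (by norm_num)
  exact hb (by convert hmid using 1; module)

end StrictlyConvex

section LineInClosure

variable {E : Type*} [AddCommGroup E] [Module ℝ E] [TopologicalSpace E]
  [IsTopologicalAddGroup E] [ContinuousSMul ℝ E] {U : Set E}

theorem Convex.add_smul_mem_closure_of_forall_add_smul_mem (hU : Convex ℝ U) (hUo : IsOpen U)
    {b x₀ v : E} (hb : b ∈ closure U) (hline : ∀ t : ℝ, x₀ + t • v ∈ U) (t : ℝ) :
    b + t • v ∈ closure U := by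
  have hcont : Continuous fun s : ℝ => (1 - s) • b + s • x₀ + t • v := by fun_prop
  have hlim : Tendsto (fun s : ℝ => (1 - s) • b + s • x₀ + t • v) (𝓝[>] 0) (𝓝 (b + t • v)) := by
    simpa using hcont.continuousWithinAt.tendsto (x := 0) (s := Ioi 0)
  refine mem_closure_of_tendsto hlim ?_
  filter_upwards [Ioo_mem_nhdsGT one_pos] with s ⟨hs₀, hs₁⟩
  have hmem := hU.combo_closure_interior_mem_interior hb
    (hUo.interior_eq.symm ▸ hline (t / s)) (sub_nonneg.2 hs₁.le) hs₀ (sub_add_cancel 1 s)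
  rw [hUo.interior_eq, smul_add, smul_smul, mul_div_cancel₀ t hs₀.ne', ← add_assoc] at hmem
  exact hmem

end LineInClosure

theorem inv_smul_mem_of_gauge_lt {E : Type*} [AddCommGroup E] [Module ℝ E] {s : Set E}
    (hs : Convex ℝ s) (h₀ : (0 : E) ∈ s) (habs : Absorbent ℝ s) {v : E} {ε : ℝ} (hε : 0 < ε)
    (hv : gauge s v < ε) : ε⁻¹ • v ∈ s := by
  refine setOfPred_gauge_lt_one_subset_self hs h₀ habs ?_
  change gauge s (ε⁻¹ • v) < 1
  rw [gauge_smul_of_nonneg (inv_nonneg.2 hε.le), smul_eq_mul, inv_mul_lt_one₀ hε]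
  exact hv

section SymmetricCore

variable {E : Type*} [AddCommGroup E] {U : Set E} {x₀ y : E}

def symmetricCore (U : Set E) (x₀ : E) : Set E :=
  ((x₀ + ·) ⁻¹' U) ∩ -((x₀ + ·) ⁻¹' U)

theorem mem_symmetricCore : y ∈ symmetricCore U x₀ ↔ x₀ + y ∈ U ∧ x₀ - y ∈ U := by
  simp [symmetricCore, sub_eq_add_neg]

theorem zero_mem_symmetricCore (hx₀ : x₀ ∈ U) : (0 : E) ∈ symmetricCore U x₀ := by
  simpa [mem_symmetricCore] using hx₀

theorem symmetricCore_mem_nhds_zero [TopologicalSpace E] [IsTopologicalAddGroup E]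
    (hUo : IsOpen U) (hx₀ : x₀ ∈ U) : symmetricCore U x₀ ∈ 𝓝 (0 : E) :=
  IsOpen.mem_nhds ((hUo.preimage (continuous_const_add x₀)).inter
    (hUo.preimage (continuous_const_add x₀)).neg) (zero_mem_symmetricCore hx₀)

variable [Module ℝ E]

theorem convex_symmetricCore (hU : Convex ℝ U) : Convex ℝ (symmetricCore U x₀) :=
  (hU.translate_preimage_right x₀).inter (hU.translate_preimage_right x₀).neg

theorem balanced_symmetricCore (hU : Convex ℝ U) : Balanced ℝ (symmetricCore U x₀) :=
  (balanced_iff_neg_mem (convex_symmetricCore hU)).2 fun _ ⟨h, h'⟩ => ⟨h', by simpa using h⟩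

end SymmetricCore

section GaugeSymmetricCore

variable {E : Type*} [AddCommGroup E] [Module ℝ E] [TopologicalSpace E]
  [IsTopologicalAddGroup E] [ContinuousSMul ℝ E] {U : Set E} {x₀ : E}

theorem add_inv_smul_mem_of_gauge_symmetricCore_lt (hU : Convex ℝ U) (hUo : IsOpen U)
    (hx₀ : x₀ ∈ U) {v : E} {ε : ℝ} (hε : 0 < ε) (hv : gauge (symmetricCore U x₀) v < ε) :
    x₀ + ε⁻¹ • v ∈ U ∧ x₀ - ε⁻¹ • v ∈ U :=
  mem_symmetricCore.1 <| inv_smul_mem_of_gauge_lt (convex_symmetricCore hU)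
    (zero_mem_symmetricCore hx₀) (absorbent_nhds_zero (symmetricCore_mem_nhds_zero hUo hx₀)) hε hv

theorem gauge_symmetricCore_eq_zero_iff (hU : StrictlyConvexSet U) (hUo : IsOpen U)
    (hb : (frontier U).Nonempty) (hx₀ : x₀ ∈ U) {v : E} :
    gauge (symmetricCore U x₀) v = 0 ↔ v = 0 := by
  refine ⟨fun hv => ?_, fun hv => hv ▸ gauge_zero⟩
  obtain ⟨b, hb_closure, hb_interior⟩ := hb
  have hline (t : ℝ) : x₀ + t • v ∈ U := by
    have ht : gauge (symmetricCore U x₀) (t • v) < 1 := by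
      rw [gauge_smul (balanced_symmetricCore hU.convex), hv, mul_zero]
      exact one_pos
    simpa using (add_inv_smul_mem_of_gauge_symmetricCore_lt hU.convex hUo hx₀ one_pos ht).1
  rw [hUo.interior_eq] at hb_interior
  exact hU.eq_zero_of_forall_add_smul_mem_closure hb_interior
    (hU.convex.add_smul_mem_closure_of_forall_add_smul_mem hUo hb_closure hline)

theorem exists_pos_forall_gauge_symmetricCore_sub_lt_mem (hU : Convex ℝ U) (hUo : IsOpen U)
    (hx₀ : x₀ ∈ U) {x : E} (hx : x ∈ U) :
    ∃ ε > (0 : ℝ), ∀ y : E, gauge (symmetricCore U x₀) (y - x) < ε → y ∈ U := by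
  have hlim : Tendsto (fun s : ℝ => (1 - s)⁻¹ • (x - s • x₀)) (𝓝 0) (𝓝 x) := by
    have hcont : ContinuousAt (fun s : ℝ => (1 - s)⁻¹ • (x - s • x₀)) 0 :=
      ((continuousAt_const.sub continuousAt_id).inv₀ (by norm_num)).smul (by fun_prop)
    simpa [ContinuousAt] using hcont
  obtain ⟨ε, hx', hε₀, hε₁⟩ : ∃ ε : ℝ, (1 - ε)⁻¹ • (x - ε • x₀) ∈ U ∧ 0 < ε ∧ ε < 1 :=
    ((hlim.mono_left nhdsWithin_le_nhds).eventually (hUo.mem_nhds hx)).and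
      (Ioo_mem_nhdsGT one_pos) |>.exists
  refine ⟨ε, hε₀, fun y hy => ?_⟩
  have hmem := hU hx' (add_inv_smul_mem_of_gauge_symmetricCore_lt hU hUo hx₀ hε₀ hy).1
    (sub_nonneg.2 hε₁.le) hε₀.le (sub_add_cancel 1 ε)
  convert hmem using 1
  rw [smul_smul, mul_inv_cancel₀ (sub_pos.2 hε₁).ne', one_smul, smul_add, smul_smul,
    mul_inv_cancel₀ hε₀.ne', one_smul]
  abel

theorem mem_closure_of_forall_exists_gauge_symmetricCore_sub_lt (hU : Convex ℝ U)
    (hUo : IsOpen U) (hx₀ : x₀ ∈ U) {x : E}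
    (hx : ∀ ε > (0 : ℝ), ∃ u ∈ U, gauge (symmetricCore U x₀) (u - x) < ε) : x ∈ closure U := by
  have hlim : Tendsto (fun ε : ℝ => (1 + ε)⁻¹ • (x + ε • x₀)) (𝓝[>] 0) (𝓝 x) := by
    have hcont : ContinuousAt (fun ε : ℝ => (1 + ε)⁻¹ • (x + ε • x₀)) 0 :=
      ((continuousAt_const.add continuousAt_id).inv₀ (by norm_num)).smul (by fun_prop)
    simpa [ContinuousAt] using hcont.tendsto.mono_left nhdsWithin_le_nhds
  refine mem_closure_of_tendsto hlim ?_
  filter_upwards [self_mem_nhdsWithin] with ε (hε : 0 < ε)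
  obtain ⟨u, hu, hux⟩ := hx ε hε
  have hmem := hU hu (add_inv_smul_mem_of_gauge_symmetricCore_lt hU hUo hx₀ hε hux).2
    (inv_nonneg.2 (by positivity : (0 : ℝ) ≤ 1 + ε)) (by positivity : 0 ≤ ε * (1 + ε)⁻¹)
    (by field_simp)
  convert hmem using 1
  match_scalars <;> field_simp
  ring

theorem exists_gauge_symmetricCore_sub_lt_of_mem_closure (hU : Convex ℝ U) (hUo : IsOpen U)
    (hx₀ : x₀ ∈ U) {x : E} (hx : x ∈ closure U) {ε : ℝ} (hε : 0 < ε) :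
    ∃ u ∈ U, gauge (symmetricCore U x₀) (u - x) < ε := by
  have hlim : Tendsto (fun t : ℝ => t * gauge (symmetricCore U x₀) (x₀ - x)) (𝓝[>] 0) (𝓝 0) := by
    simpa using (tendsto_id.mul_const _).mono_left (nhdsWithin_le_nhds (a := (0 : ℝ)))
  obtain ⟨t, htε, ht₀, ht₁⟩ :
      ∃ t : ℝ, t * gauge (symmetricCore U x₀) (x₀ - x) < ε ∧ 0 < t ∧ t < 1 :=
    ((hlim.eventually (gt_mem_nhds hε)).and (Ioo_mem_nhdsGT one_pos)).exists
  refine ⟨(1 - t) • x + t • x₀, ?_, ?_⟩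
  · simpa [hUo.interior_eq] using hU.combo_closure_interior_mem_interior hx
      (hUo.interior_eq.symm ▸ hx₀) (sub_nonneg.2 ht₁.le) ht₀ (sub_add_cancel 1 t)
  · have hdiff : (1 - t) • x + t • x₀ - x = t • (x₀ - x) := by module
    rwa [hdiff, gauge_smul_of_nonneg ht₀.le, smul_eq_mul]

theorem setOf_forall_exists_gauge_symmetricCore_sub_lt_eq_closure (hU : Convex ℝ U)
    (hUo : IsOpen U) (hx₀ : x₀ ∈ U) :
    {x : E | ∀ ε > (0 : ℝ), ∃ u ∈ U, gauge (symmetricCore U x₀) (u - x) < ε} = closure U :=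
  Subset.antisymm
    (fun _ hx => mem_closure_of_forall_exists_gauge_symmetricCore_sub_lt hU hUo hx₀ hx)
    fun _ hx _ hε => exists_gauge_symmetricCore_sub_lt_of_mem_closure hU hUo hx₀ hx hε

end GaugeSymmetricCore

theorem stmt17_general {X : Type*} [AddCommGroup X] [Module ℝ X] [TopologicalSpace X]
    [IsTopologicalAddGroup X] [ContinuousSMul ℝ X]
    (U : Set X) (hUo : IsOpen U) (hUsc : StrictlyConvexSet U)
    (hb : (frontier U).Nonempty) :
    ∃ N : X → ℝ, Continuous N ∧
      (∀ x : X, N x = 0 ↔ x = 0) ∧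
      (∀ (a : ℝ) (x : X), N (a • x) = |a| * N x) ∧
      (∀ x y : X, N (x + y) ≤ N x + N y) ∧
      (∀ x ∈ U, ∃ ε > (0 : ℝ), ∀ y : X, N (y - x) < ε → y ∈ U) ∧
      ({x : X | ∀ ε > (0 : ℝ), ∃ u ∈ U, N (u - x) < ε} = closure U) ∧
      (∀ x ∈ {x : X | ∀ ε > (0 : ℝ), ∃ u ∈ U, N (u - x) < ε},
        ∀ y ∈ {x : X | ∀ ε > (0 : ℝ), ∃ u ∈ U, N (u - x) < ε}, x ≠ y →
        ∀ t : ℝ, 0 < t → t < 1 → (1 - t) • x + t • y ∈ U) := by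
  obtain ⟨x₀, hx₀⟩ : U.Nonempty := closure_nonempty_iff.1 (hb.mono frontier_subset_closure)
  have hU : Convex ℝ U := hUsc.convex
  have hW : symmetricCore U x₀ ∈ 𝓝 0 := symmetricCore_mem_nhds_zero hUo hx₀
  have hclosure := setOf_forall_exists_gauge_symmetricCore_sub_lt_eq_closure hU hUo hx₀
  refine ⟨gauge (symmetricCore U x₀), continuous_gauge (convex_symmetricCore hU) hW,
    fun _ => gauge_symmetricCore_eq_zero_iff hUsc hUo hb hx₀,
    fun a x => by simpa using gauge_smul (balanced_symmetricCore hU) a x,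
    gauge_add_le (convex_symmetricCore hU) (absorbent_nhds_zero hW),
    fun _ hx => exists_pos_forall_gauge_symmetricCore_sub_lt_mem hU hUo hx₀ hx, hclosure, ?_⟩
  rw [hclosure]
  exact hUsc

/-- If `U` is a strictly convex open set with nonempty boundary in a Hausdorff topological
vector space `X`, then `X` admits a continuous norm for which `U` remains open, the norm
closure of `U` coincides with its closure in `X`, and `U` remains strictly convex with
respect to the norm closure. -/
theorem stmt17 {X : Type*} [AddCommGroup X] [Module ℝ X] [TopologicalSpace X]
    [IsTopologicalAddGroup X] [ContinuousSMul ℝ X] [T2Space X]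
    (U : Set X) (hUo : IsOpen U) (hUsc : StrictlyConvexSet U)
    (hb : (frontier U).Nonempty) :
    ∃ N : X → ℝ, Continuous N ∧
      (∀ x : X, N x = 0 ↔ x = 0) ∧
      (∀ (a : ℝ) (x : X), N (a • x) = |a| * N x) ∧
      (∀ x y : X, N (x + y) ≤ N x + N y) ∧
      (∀ x ∈ U, ∃ ε > (0 : ℝ), ∀ y : X, N (y - x) < ε → y ∈ U) ∧
      ({x : X | ∀ ε > (0 : ℝ), ∃ u ∈ U, N (u - x) < ε} = closure U) ∧
      (∀ x ∈ {x : X | ∀ ε > (0 : ℝ), ∃ u ∈ U, N (u - x) < ε},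
        ∀ y ∈ {x : X | ∀ ε > (0 : ℝ), ∃ u ∈ U, N (u - x) < ε}, x ≠ y →
        ∀ t : ℝ, 0 < t → t < 1 → (1 - t) • x + t • y ∈ U) :=
  stmt17_general U hUo hUsc hb
end

section
/- Let X be a perfectly normal topological space, Y a separable real normed space, and f : X → Y an F_σ-measurable function. Then there exists a sequence of σ̄-continuous functions f_n : X → Y (n ≥ 0) such that f(x) = Σ_{n=0}^∞ f_n(x) for every x ∈ X and sup_{x∈X} ‖f_n(x)‖ ≤ 1/2^n for every n ≥ 1. -/
open Topology Filter Set TopologicalSpace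

/-!
Cover `Y` by the `ε`-balls around a dense sequence. Their preimages under `f` are `Fσ`, so `X` is
covered by countably many closed sets `C k` on each of which `f` is `ε`-close to a constant `v k`.
Sending `x` to `v k` for the first `k` with `x ∈ C k` gives an `ε`-approximation of `f` whose
fibres are of the form `closed ∩ open`; in a perfectly normal space these are `Fσ`, so the
approximation is σ̄-continuous. Approximating within `1 / 2 ^ (n + 2)` and taking consecutive
differences gives the series.
-/

section FSigma

variable {X Y : Type*} [TopologicalSpace X]

lemma IsGδ.isFSigma_compl {s : Set X} (hs : IsGδ s) : IsFSigma sᶜ := by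
  obtain ⟨U, hU, rfl⟩ := hs.eq_iInter_nat
  exact ⟨fun n => (U n)ᶜ, fun n => (hU n).isClosed_compl, compl_iInter U⟩

lemma IsOpen.isFSigma [PerfectlyNormalSpace X] {s : Set X} (hs : IsOpen s) : IsFSigma s := by
  simpa using hs.isClosed_compl.isGδ.isFSigma_compl

lemma IsFSigma.inter_isClosed {s t : Set X} (hs : IsFSigma s) (ht : IsClosed t) :
    IsFSigma (s ∩ t) := by
  obtain ⟨F, hF, rfl⟩ := hs
  exact ⟨fun n => F n ∩ t, fun n => (hF n).inter ht, iUnion_inter t F⟩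

open scoped Classical in
lemma isFSigma_find_preimage_singleton [PerfectlyNormalSpace X] {C : ℕ → Set X}
    (hC : ∀ n, IsClosed (C n)) (hcov : ∀ x, ∃ n, x ∈ C n) (j : ℕ) :
    IsFSigma ((fun x => Nat.find (hcov x)) ⁻¹' {j}) := by
  have hfiber : (fun x => Nat.find (hcov x)) ⁻¹' {j} = (⋃ i < j, C i)ᶜ ∩ C j := by
    ext x
    simp [Nat.find_eq_iff, and_comm]
  rw [hfiber]
  exact ((Set.finite_lt_nat j).isClosed_biUnion fun i _ => hC i).isOpen_compl.isFSigma
    |>.inter_isClosed (hC j)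

lemma functionallyOpen_ball [PseudoMetricSpace Y] (c : Y) (r : ℝ) :
    FunctionallyOpen (Metric.ball c r) :=
  ⟨fun y => dist y c, continuous_id.dist continuous_const, Iio r, isOpen_Iio, rfl⟩

end FSigma

section SigmaContinuous

variable {X Y Z : Type*} [TopologicalSpace X] [TopologicalSpace Y] [TopologicalSpace Z]

lemma sigmaContinuous_comp_of_isFSigma_fibers {φ : X → ℕ} (hφ : ∀ j, IsFSigma (φ ⁻¹' {j}))
    (v : ℕ → Y) : SigmaContinuous (v ∘ φ) := by
  choose F hF hφF using hφ
  refine ⟨fun k => F k.unpair.1 k.unpair.2, fun k => hF _ _, ?_, fun k => ?_⟩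
  · simp_rw [iUnion_unpair, ← hφF, ← preimage_iUnion, iUnion_of_singleton, preimage_univ]
  · refine continuousOn_const (c := v k.unpair.1) |>.congr fun x hx => ?_
    have hx' : x ∈ φ ⁻¹' {k.unpair.1} := hφF _ ▸ mem_iUnion_of_mem _ hx
    exact congrArg v hx'

lemma SigmaContinuous.prodMk {f : X → Y} {g : X → Z} (hf : SigmaContinuous f)
    (hg : SigmaContinuous g) : SigmaContinuous fun x => (f x, g x) := by
  obtain ⟨F, hF, hFcov, hfF⟩ := hf
  obtain ⟨G, hG, hGcov, hgG⟩ := hg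
  refine ⟨fun k => F k.unpair.1 ∩ G k.unpair.2, fun k => (hF _).inter (hG _), ?_, fun k =>
    ((hfF _).mono inter_subset_left).prodMk ((hgG _).mono inter_subset_right)⟩
  simp_rw [iUnion_unpair fun i j => F i ∩ G j, ← inter_iUnion, ← iUnion_inter, hFcov, hGcov,
    univ_inter]

lemma Continuous.comp_sigmaContinuous {g : Y → Z} {f : X → Y} (hg : Continuous g)
    (hf : SigmaContinuous f) : SigmaContinuous (g ∘ f) := by
  obtain ⟨F, hF, hFcov, hfF⟩ := hf
  exact ⟨F, hF, hFcov, fun n => hg.comp_continuousOn (hfF n)⟩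

lemma SigmaContinuous.sub [AddGroup Y] [ContinuousSub Y] {f g : X → Y} (hf : SigmaContinuous f)
    (hg : SigmaContinuous g) : SigmaContinuous fun x => f x - g x :=
  continuous_sub.comp_sigmaContinuous (hf.prodMk hg)

end SigmaContinuous

open scoped Classical in
theorem FSigmaMeasurable.exists_sigmaContinuous_dist_lt {X Y : Type*} [TopologicalSpace X]
    [PerfectlyNormalSpace X] [PseudoMetricSpace Y] [SeparableSpace Y] [Nonempty Y] {f : X → Y}
    (hf : FSigmaMeasurable f) {ε : ℝ} (hε : 0 < ε) :
    ∃ h : X → Y, SigmaContinuous h ∧ ∀ x, dist (h x) (f x) < ε := by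
  obtain ⟨y, hy⟩ := exists_dense_seq Y
  choose F hF hfF using fun n => hf _ (functionallyOpen_ball (y n) ε)
  set C : ℕ → Set X := fun k => F k.unpair.1 k.unpair.2
  have hC_dist : ∀ k, ∀ x ∈ C k, dist (y k.unpair.1) (f x) < ε := fun k x hx => by
    have : x ∈ f ⁻¹' Metric.ball (y k.unpair.1) ε := hfF _ ▸ mem_iUnion_of_mem _ hx
    rwa [mem_preimage, Metric.mem_ball, dist_comm] at this
  have hcov : ∀ x, ∃ k, x ∈ C k := fun x => by
    obtain ⟨n, hn⟩ := Metric.denseRange_iff.1 hy (f x) ε hε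
    have : x ∈ ⋃ m, F n m := hfF n ▸ Metric.mem_ball.2 hn
    obtain ⟨m, hm⟩ := mem_iUnion.1 this
    exact ⟨Nat.pair n m, by simpa only [C, Nat.unpair_pair] using hm⟩
  refine ⟨_, sigmaContinuous_comp_of_isFSigma_fibers
    (isFSigma_find_preimage_singleton (fun k => hF _ _) hcov) fun k => y k.unpair.1, fun x => ?_⟩
  exact hC_dist _ x (Nat.find_spec (hcov x))

section Telescope

variable {E : Type*}

def telescope [Sub E] (u : ℕ → E) : ℕ → E
  | 0 => u 0
  | n + 1 => u (n + 1) - u n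

lemma sum_range_succ_telescope [AddCommGroup E] (u : ℕ → E) (N : ℕ) :
    ∑ n ∈ Finset.range (N + 1), telescope u n = u N := by
  rw [Finset.sum_range_succ']
  simp only [telescope, Finset.sum_range_sub, sub_add_cancel]

lemma Filter.Tendsto.sum_range_telescope [AddCommGroup E] [TopologicalSpace E] {u : ℕ → E}
    {a : E} (h : Tendsto u atTop (𝓝 a)) :
    Tendsto (fun N => ∑ n ∈ Finset.range N, telescope u n) atTop (𝓝 a) := by
  rw [← tendsto_add_atTop_iff_nat 1]
  simpa only [sum_range_succ_telescope] using h

lemma norm_telescope_succ_le [SeminormedAddCommGroup E] {u : ℕ → E} {a : E}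
    (h : ∀ n, dist (u n) a ≤ 1 / 2 ^ (n + 2)) (n : ℕ) :
    ‖telescope u (n + 1)‖ ≤ 1 / 2 ^ (n + 1) :=
  calc ‖telescope u (n + 1)‖ = dist (u (n + 1)) (u n) := (dist_eq_norm _ _).symm
    _ ≤ dist (u (n + 1)) a + dist (u n) a := dist_triangle_right _ _ _
    _ ≤ 1 / 2 ^ (n + 3) + 1 / 2 ^ (n + 2) := add_le_add (h _) (h _)
    _ = 3 / 4 * (1 / 2 ^ (n + 1)) := by ring
    _ ≤ 1 / 2 ^ (n + 1) := mul_le_of_le_one_left (by positivity) (by norm_num)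

end Telescope

theorem stmt19_general {X Y : Type*} [TopologicalSpace X] [PerfectlyNormalSpace X]
    [NormedAddCommGroup Y] [SeparableSpace Y]
    (f : X → Y) (hf : FSigmaMeasurable f) :
    ∃ g : ℕ → X → Y, (∀ n, SigmaContinuous (g n)) ∧
      (∀ x : X, Tendsto (fun N => ∑ n ∈ Finset.range N, g n x) atTop (𝓝 (f x))) ∧
      ∀ n : ℕ, 1 ≤ n → ∀ x : X, ‖g n x‖ ≤ 1 / 2 ^ n := by
  choose u hu_cont hu_dist using fun n : ℕ =>
    hf.exists_sigmaContinuous_dist_lt (ε := 1 / 2 ^ (n + 2)) (by positivity)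
  refine ⟨fun n x => telescope (u · x) n, ?_, fun x => ?_, ?_⟩
  · rintro (_ | n)
    exacts [hu_cont 0, (hu_cont (n + 1)).sub (hu_cont n)]
  · have h_geom : Tendsto (fun n : ℕ => (1 : ℝ) / 2 ^ (n + 2)) atTop (𝓝 0) := by
      have h_half := tendsto_pow_atTop_nhds_zero_of_lt_one (r := (1 / 2 : ℝ)) (by norm_num)
        (by norm_num)
      simpa only [one_div_pow, Function.comp_def] using h_half.comp (tendsto_add_atTop_nat 2)
    exact Tendsto.sum_range_telescope <| tendsto_iff_dist_tendsto_zero.2 <|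
      squeeze_zero (fun _ => dist_nonneg) (fun n => (hu_dist n x).le) h_geom
  · rintro (_ | n) hn x
    · omega
    · exact norm_telescope_succ_le (fun k => (hu_dist k x).le) n

/-- Every `Fσ`-measurable function from a perfectly normal space to a separable normed
space is the sum of a series of σ̄-continuous functions `f n` with `‖f n x‖ ≤ 1/2^n` for
all `n ≥ 1`. -/
theorem stmt19 {X Y : Type*} [TopologicalSpace X] [PerfectlyNormalSpace X]
    [NormedAddCommGroup Y] [NormedSpace ℝ Y] [SeparableSpace Y]
    (f : X → Y) (hf : FSigmaMeasurable f) :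
    ∃ g : ℕ → X → Y, (∀ n, SigmaContinuous (g n)) ∧
      (∀ x : X, Tendsto (fun N => ∑ n ∈ Finset.range N, g n x) atTop (𝓝 (f x))) ∧
      ∀ n : ℕ, 1 ≤ n → ∀ x : X, ‖g n x‖ ≤ 1 / 2 ^ n :=
  stmt19_general f hf
end
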